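/- arXiv:1810.01848 — 3 statements merged into one kernel-verified Lean document; each statement's English description precedes it below -/
import Mathlib

section
/- Define inductively a momentum tree: it is either a leaf carrying a momentum j ∈ ℕ (with root momentum j), or an internal node carrying natural numbers S, j, k with j ≤ S and k ≤ S, having root momentum j, together with three momentum subtrees whose root momenta are S−j, k, and S−k respectively. For a momentum tree T, let n(T) be its number of internal nodes, Σ(T) the sum of the values S over its internal nodes, and Λ(T) the sum of the momenta carried by its leaves. Then for every momentum tree T with n(T) ≥ 1, one has Σ(T) ≤ n(T)·Λ(T). -/
/-- A momentum tree with root momentum `j`: either a leaf carrying momentum `j`, or an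
internal node carrying `S, j, k` with `j ≤ S`, `k ≤ S`, and three subtrees with root
momenta `S - j`, `k`, `S - k`. -/
inductive MTree : ℕ → Type
  | leaf (j : ℕ) : MTree j
  | node (S j k : ℕ) (hj : j ≤ S) (hk : k ≤ S)
      (t₁ : MTree (S - j)) (t₂ : MTree k) (t₃ : MTree (S - k)) : MTree j

namespace MTree

/-- Number of internal nodes. -/
def numNodes : ∀ {j : ℕ}, MTree j → ℕ
  | _, leaf _ => 0
  | _, node _ _ _ _ _ t₁ t₂ t₃ => 1 + t₁.numNodes + t₂.numNodes + t₃.numNodes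

/-- Sum of the values `S` over internal nodes. -/
def sumS : ∀ {j : ℕ}, MTree j → ℕ
  | _, leaf _ => 0
  | _, node S _ _ _ _ t₁ t₂ t₃ => S + t₁.sumS + t₂.sumS + t₃.sumS

/-- Sum of the momenta carried by the leaves. -/
def leafSum : ∀ {j : ℕ}, MTree j → ℕ
  | _, leaf j => j
  | _, node _ _ _ _ _ t₁ t₂ t₃ => t₁.leafSum + t₂.leafSum + t₃.leafSum

end MTree

lemma MTree.le_leafSum : ∀ {j : ℕ} (T : MTree j), j ≤ T.leafSum := by
  intro j T
  induction T with
  | leaf j => simp [MTree.leafSum]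
  | node S j k hj hk t₁ t₂ t₃ ih₁ ih₂ ih₃ =>
    simp only [MTree.leafSum]; omega

lemma MTree.sumS_le : ∀ {j : ℕ} (T : MTree j), T.sumS ≤ T.numNodes * T.leafSum := by
  intro j T
  induction T with
  | leaf j => simp [MTree.sumS, MTree.numNodes]
  | node S j k hj hk t₁ t₂ t₃ ih₁ ih₂ ih₃ =>
    simp only [MTree.sumS, MTree.numNodes, MTree.leafSum]
    have h₁ := MTree.le_leafSum t₁
    have h₂ := MTree.le_leafSum t₂
    have h₃ := MTree.le_leafSum t₃
    have hS : S ≤ t₁.leafSum + t₂.leafSum + t₃.leafSum := by omega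
    have m₁ : t₁.numNodes * t₁.leafSum ≤ t₁.numNodes * (t₁.leafSum + t₂.leafSum + t₃.leafSum) :=
      Nat.mul_le_mul_left _ (by omega)
    have m₂ : t₂.numNodes * t₂.leafSum ≤ t₂.numNodes * (t₁.leafSum + t₂.leafSum + t₃.leafSum) :=
      Nat.mul_le_mul_left _ (by omega)
    have m₃ : t₃.numNodes * t₃.leafSum ≤ t₃.numNodes * (t₁.leafSum + t₂.leafSum + t₃.leafSum) :=
      Nat.mul_le_mul_left _ (by omega)
    calc S + t₁.sumS + t₂.sumS + t₃.sumS
        ≤ (t₁.leafSum + t₂.leafSum + t₃.leafSum)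
          + t₁.numNodes * (t₁.leafSum + t₂.leafSum + t₃.leafSum)
          + t₂.numNodes * (t₁.leafSum + t₂.leafSum + t₃.leafSum)
          + t₃.numNodes * (t₁.leafSum + t₂.leafSum + t₃.leafSum) := by omega
      _ = (1 + t₁.numNodes + t₂.numNodes + t₃.numNodes)
          * (t₁.leafSum + t₂.leafSum + t₃.leafSum) := by ring

/-- For every momentum tree with at least one internal node,
`Σ(T) ≤ n(T) · Λ(T)`. -/
theorem stmt4 : ∀ (j : ℕ) (T : MTree j), 1 ≤ T.numNodes →
    T.sumS ≤ T.numNodes * T.leafSum := by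
  intro j T _; exact MTree.sumS_le T
end

section
/- For γ ∈ ℕ and z ∈ (0,1), let L_γ(z) = ∑_{r=1}^∞ r^γ z^r, and define D_γ(p) = ((1−p)/4)·[ (p(p+3)/(p+1))·L_γ(p²) + (p²/(p+1)² − 2)·L_γ(p) ] + ((1−p)²/4)·[ (L_{γ+1}(p) + L_γ(p))/(1+p) + L_{γ+1}(p²) + L_γ(p²) ] for p ∈ (0,1). Then, as p → 1 from below, (1−p)^γ · D_γ(p) tends to (γ!/16)·( (5+γ)/2^γ + 2γ − 5 ). -/
/-- The polylogarithm-type series `L_γ(z) = ∑_{r=1}^∞ r^γ z^r`. -/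
noncomputable def polyL (γ : ℕ) (z : ℝ) : ℝ := ∑' r : ℕ, ((r : ℝ) + 1) ^ γ * z ^ (r + 1)

/-- The dominant (melonic) part of the coefficient of `t²` in the averaged Sobolev norm. -/
noncomputable def Dmelo (γ : ℕ) (p : ℝ) : ℝ :=
  ((1 - p) / 4) *
      ((p * (p + 3) / (p + 1)) * polyL γ (p ^ 2) + (p ^ 2 / (p + 1) ^ 2 - 2) * polyL γ p) +
    ((1 - p) ^ 2 / 4) *
      ((polyL (γ + 1) p + polyL γ p) / (1 + p) + polyL (γ + 1) (p ^ 2) + polyL γ (p ^ 2))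

/-!
Telescoping `(1 - z) L_γ(z)` and expanding `(r + 2)^γ - (r + 1)^γ` binomially gives
`(1 - z) L_γ = z + z ∑_{j < γ} C(γ, j) L_j`, so by strong induction on `γ` the normalised
series `(1 - z)^(γ + 1) L_γ(z)` tends to `γ!` as `z → 1⁻`, the only surviving term being
`j = γ - 1`. Since `1 - p² = (1 - p)(1 + p)`, the same holds for `(1 - p)^(γ + 1) L_γ(p²)`,
with limit `γ!/2^(γ + 1)`. Finally `(1 - p)^γ D_γ(p)` is a combination of these normalised
series for `γ` and `γ + 1`, with coefficients continuous at `p = 1`.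
-/

open Filter Topology Finset

lemma add_one_pow_sub_pow {R : Type*} [CommRing R] (x : R) (n : ℕ) :
    (x + 1) ^ n - x ^ n = ∑ j ∈ range n, (n.choose j : R) * x ^ j := by
  rw [add_pow, sum_range_succ]
  simp [mul_comm]

lemma hasSum_polyL (γ : ℕ) {z : ℝ} (hz : |z| < 1) :
    HasSum (fun r : ℕ => ((r : ℝ) + 1) ^ γ * z ^ (r + 1)) (polyL γ z) := by
  have h := summable_pow_mul_geometric_of_norm_lt_one (R := ℝ) γ (r := z) (by simpa using hz)
  exact Summable.hasSum (by simpa using (summable_nat_add_iff 1).mpr h)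

lemma one_sub_mul_polyL (γ : ℕ) {z : ℝ} (hz : |z| < 1) :
    (1 - z) * polyL γ z = z + z * ∑ j ∈ range γ, (γ.choose j : ℝ) * polyL j z := by
  have hdiff := ((hasSum_nat_add_iff' 1).mpr (hasSum_polyL γ hz)).sub
    ((hasSum_polyL γ hz).mul_left z)
  have hbinom : HasSum
      (fun r : ℕ =>
        z * ∑ j ∈ range γ, (γ.choose j : ℝ) * (((r : ℝ) + 1) ^ j * z ^ (r + 1)))
      (z * ∑ j ∈ range γ, (γ.choose j : ℝ) * polyL j z) :=
    (hasSum_sum fun j _ => (hasSum_polyL j hz).mul_left _).mul_left z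
  have hterm (r : ℕ) : ((((r + 1 : ℕ) : ℝ) + 1) ^ γ * z ^ (r + 1 + 1)
      - z * (((r : ℝ) + 1) ^ γ * z ^ (r + 1)))
      = z * ∑ j ∈ range γ, (γ.choose j : ℝ) * (((r : ℝ) + 1) ^ j * z ^ (r + 1)) := by
    simp_rw [← mul_assoc, ← sum_mul, ← add_one_pow_sub_pow]
    push_cast
    ring
  have h := hdiff.unique (hbinom.congr_fun hterm)
  simp only [range_one, sum_singleton, CharP.cast_eq_zero, zero_add, one_pow, pow_one,
    one_mul] at h
  linear_combination h

lemma eventually_abs_lt_one_nhdsLT_one : ∀ᶠ z : ℝ in 𝓝[<] 1, |z| < 1 := by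
  filter_upwards [Ioo_mem_nhdsLT (show (-1 : ℝ) < 1 by norm_num)] with z hz
  exact abs_lt.mpr hz

lemma tendsto_sq_nhdsLT_one : Tendsto (fun p : ℝ => p ^ 2) (𝓝[<] 1) (𝓝[<] 1) := by
  refine tendsto_nhdsWithin_iff.mpr ⟨?_, ?_⟩
  · simpa using ((continuous_pow 2).tendsto (1 : ℝ)).mono_left nhdsWithin_le_nhds
  · filter_upwards [eventually_abs_lt_one_nhdsLT_one] with p hp
    exact (sq_lt_one_iff_abs_lt_one p).mpr hp

lemma tendsto_one_sub_pow_mul_polyL (γ : ℕ) :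
    Tendsto (fun z => (1 - z) ^ (γ + 1) * polyL γ z) (𝓝[<] 1) (𝓝 (γ.factorial : ℝ)) := by
  have hz : Tendsto (fun z : ℝ => z) (𝓝[<] 1) (𝓝 1) := nhdsWithin_le_nhds
  have hz' : Tendsto (fun z : ℝ => 1 - z) (𝓝[<] 1) (𝓝 0) := by
    simpa using (tendsto_const_nhds (x := (1 : ℝ))).sub hz
  induction γ using Nat.strong_induction_on with
  | _ γ ih =>
  rcases γ with _ | n
  · simp only [zero_add, pow_one, Nat.factorial_zero, Nat.cast_one]
    refine hz.congr' ?_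
    filter_upwards [eventually_abs_lt_one_nhdsLT_one] with z hz1
    simpa using (one_sub_mul_polyL 0 hz1).symm
  · have hlim : Tendsto (fun z => z * ((1 - z) ^ (n + 1) + ∑ j ∈ range (n + 1),
        ((n + 1).choose j : ℝ) * (1 - z) ^ (n - j) * ((1 - z) ^ (j + 1) * polyL j z))) (𝓝[<] 1)
        (𝓝 (1 * (0 ^ (n + 1) + ∑ j ∈ range (n + 1),
          ((n + 1).choose j : ℝ) * 0 ^ (n - j) * (j.factorial : ℝ)))) :=
      hz.mul ((hz'.pow _).add (tendsto_finsetSum _ fun j hj =>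
        (tendsto_const_nhds.mul (hz'.pow _)).mul (ih j (by simpa using hj))))
    have hval : (1 * (0 ^ (n + 1) + ∑ j ∈ range (n + 1),
        ((n + 1).choose j : ℝ) * 0 ^ (n - j) * (j.factorial : ℝ))) = (n + 1).factorial := by
      rw [sum_eq_single_of_mem n (self_mem_range_succ n) fun j hj hjn => by
        rw [zero_pow (by simp at hj; omega), mul_zero, zero_mul]]
      simp [Nat.factorial_succ]
    rw [← hval]
    refine hlim.congr' ?_
    filter_upwards [eventually_abs_lt_one_nhdsLT_one] with z hz1
    have hsum : ∑ j ∈ range (n + 1), ((n + 1).choose j : ℝ) * (1 - z) ^ (n - j) *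
        ((1 - z) ^ (j + 1) * polyL j z)
        = (1 - z) ^ (n + 1) * ∑ j ∈ range (n + 1), ((n + 1).choose j : ℝ) * polyL j z := by
      rw [mul_sum]
      refine sum_congr rfl fun j hj => ?_
      rw [← Nat.sub_add_cancel (Nat.lt_succ_iff.mp (mem_range.mp hj)), pow_add]
      simp only [add_tsub_cancel_right]
      ring
    rw [hsum, pow_succ _ (n + 1), mul_assoc, one_sub_mul_polyL _ hz1]
    ring

lemma tendsto_one_sub_pow_mul_polyL_sq (γ : ℕ) :
    Tendsto (fun p => (1 - p) ^ (γ + 1) * polyL γ (p ^ 2)) (𝓝[<] 1)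
      (𝓝 ((γ.factorial : ℝ) / 2 ^ (γ + 1))) := by
  have hid : Tendsto (fun p : ℝ => p) (𝓝[<] 1) (𝓝 1) := nhdsWithin_le_nhds
  have hp : Tendsto (fun p : ℝ => 1 + p) (𝓝[<] 1) (𝓝 2) := by
    simpa [one_add_one_eq_two] using (tendsto_const_nhds (x := (1 : ℝ))).add hid
  refine (((tendsto_one_sub_pow_mul_polyL γ).comp tendsto_sq_nhdsLT_one).div (hp.pow (γ + 1))
    (by positivity)).congr' ?_
  filter_upwards [eventually_abs_lt_one_nhdsLT_one] with p hp1
  have hp0 : 1 + p ≠ 0 := by linarith [neg_abs_le p]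
  rw [Pi.div_apply, Function.comp_apply, div_eq_iff (pow_ne_zero _ hp0), mul_right_comm,
    ← mul_pow]
  ring

/-- As `p → 1⁻` (with `p ∈ (0,1)`), `(1-p)^γ · D_γ(p)` tends to
`(γ!/16)·((5+γ)/2^γ + 2γ - 5)`. -/
theorem stmt10 (γ : ℕ) :
    Filter.Tendsto (fun p : ℝ => (1 - p) ^ γ * Dmelo γ p)
      (nhdsWithin 1 (Set.Ioo 0 1))
      (nhds ((Nat.factorial γ : ℝ) / 16 *
        ((5 + (γ : ℝ)) / (2 : ℝ) ^ γ + 2 * (γ : ℝ) - 5))) := by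
  have hp : Tendsto (fun p : ℝ => p) (𝓝[<] 1) (𝓝 1) := nhdsWithin_le_nhds
  have hq : Tendsto (fun p : ℝ => 1 - p) (𝓝[<] 1) (𝓝 0) := by
    simpa using (tendsto_const_nhds (x := (1 : ℝ))).sub hp
  have hX := tendsto_one_sub_pow_mul_polyL γ
  have hX' := tendsto_one_sub_pow_mul_polyL (γ + 1)
  have hY := tendsto_one_sub_pow_mul_polyL_sq γ
  have hY' := tendsto_one_sub_pow_mul_polyL_sq (γ + 1)
  have hlead := ((((hp.mul (hp.add_const 3)).div (hp.add_const 1) (by norm_num)).mul hY).add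
    ((((hp.pow 2).div ((hp.add_const 1).pow 2) (by norm_num)).sub_const 2).mul hX)).div_const 4
  have htail := ((((hX'.add (hq.mul hX)).div (hp.const_add 1) (by norm_num)).add hY').add
    (hq.mul hY)).div_const 4
  refine Tendsto.mono_left ?_ (nhdsWithin_mono _ Set.Ioo_subset_Iio_self)
  convert hlead.add htail using 1
  · funext p
    simp only [Dmelo, Pi.div_apply]
    ring
  · congr 1
    rw [Nat.factorial_succ]
    push_cast
    field_simp
    ring
end

section
/- Fix p ∈ (0,1) and define chain functions F_L : ℤ → ℝ for L ∈ ℕ recursively by F_0(j) = p^{|j|} and F_{L+1}(j) = ∑_{k ∈ ℤ} p^{|j−k|} · F_L(k). Then for every s ∈ ℕ and every r ∈ ℕ, F_s(r) ≤ p^{r/2} · (4/(1−p))^s, where p^{r/2} denotes the real power. -/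
/-!
Write `p = q²` with `q = √p`. Induction on `s` gives `F_s(j) ≤ q^|j| ((1+q)/(1-q))^s`: in the
inductive step the triangle inequality `|j| ≤ |j-k| + |k|` gives
`p^|j-k| q^|k| ≤ q^|j| q^|j-k|`, and `∑_k q^|j-k| = (1+q)/(1-q)`. Finally
`(1+q)/(1-q) = (1+q)²/(1-p) ≤ 4/(1-p)`.
-/

/-- The chain functions: `F p 0 j = p^{|j|}` and
`F p (L+1) j = ∑_{k ∈ ℤ} p^{|j-k|} · F p L k`. -/
noncomputable def chainF (p : ℝ) : ℕ → ℤ → ℝ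
  | 0 => fun j => p ^ j.natAbs
  | L + 1 => fun j => ∑' k : ℤ, p ^ (j - k).natAbs * chainF p L k

lemma hasSum_pow_natAbs {q : ℝ} (hq0 : 0 ≤ q) (hq1 : q < 1) :
    HasSum (fun k : ℤ => q ^ k.natAbs) ((1 + q) / (1 - q)) := by
  have hgeo : HasSum (fun n : ℕ => q ^ n) (1 - q)⁻¹ := hasSum_geometric_of_lt_one hq0 hq1
  have hneg : HasSum (fun n : ℕ => q ^ (-((n : ℤ) + 1)).natAbs) (q * (1 - q)⁻¹) := by
    have hnat : ∀ n : ℕ, (-((n : ℤ) + 1)).natAbs = n + 1 := by omega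
    simpa only [hnat, pow_succ', mul_comm] using hgeo.mul_left q
  convert HasSum.of_nat_of_neg_add_one (f := fun k : ℤ => q ^ k.natAbs) hgeo hneg using 1
  field_simp [(sub_pos.2 hq1).ne']

lemma hasSum_pow_natAbs_sub {q : ℝ} (hq0 : 0 ≤ q) (hq1 : q < 1) (j : ℤ) :
    HasSum (fun k : ℤ => q ^ (j - k).natAbs) ((1 + q) / (1 - q)) :=
  (Equiv.subLeft j).hasSum_iff (f := fun k : ℤ => q ^ k.natAbs) |>.2 (hasSum_pow_natAbs hq0 hq1)

lemma chainF_nonneg {p : ℝ} (hp : 0 ≤ p) (s : ℕ) (j : ℤ) : 0 ≤ chainF p s j := by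
  induction s generalizing j with
  | zero => exact pow_nonneg hp _
  | succ L ih => exact tsum_nonneg fun k => mul_nonneg (pow_nonneg hp _) (ih k)

lemma sq_pow_natAbs_sub_mul_pow_natAbs_le {q : ℝ} (hq0 : 0 ≤ q) (hq1 : q ≤ 1) (j k : ℤ) :
    (q ^ 2) ^ (j - k).natAbs * q ^ k.natAbs ≤ q ^ j.natAbs * q ^ (j - k).natAbs := by
  rw [← pow_mul, ← pow_add, ← pow_add]
  refine pow_le_pow_of_le_one hq0 hq1 ?_
  have := Int.natAbs_add_le (j - k) k
  rw [sub_add_cancel] at this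
  omega

lemma chainF_sq_le {q : ℝ} (hq0 : 0 ≤ q) (hq1 : q < 1) (s : ℕ) (j : ℤ) :
    chainF (q ^ 2) s j ≤ q ^ j.natAbs * ((1 + q) / (1 - q)) ^ s := by
  induction s generalizing j with
  | zero => simpa [chainF, ← pow_mul] using pow_le_pow_of_le_one hq0 hq1.le (by omega)
  | succ L ih =>
    set C := ((1 + q) / (1 - q)) ^ L
    have hC : 0 ≤ C := pow_nonneg (div_nonneg (by linarith) (by linarith)) L
    have hmajor : HasSum (fun k : ℤ => q ^ j.natAbs * q ^ (j - k).natAbs * C)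
        (q ^ j.natAbs * ((1 + q) / (1 - q)) * C) :=
      ((hasSum_pow_natAbs_sub hq0 hq1 j).mul_left _).mul_right C
    have hterm (k : ℤ) : (q ^ 2) ^ (j - k).natAbs * chainF (q ^ 2) L k ≤
        q ^ j.natAbs * q ^ (j - k).natAbs * C :=
      calc (q ^ 2) ^ (j - k).natAbs * chainF (q ^ 2) L k
          ≤ (q ^ 2) ^ (j - k).natAbs * (q ^ k.natAbs * C) := by gcongr; exact ih k
        _ = (q ^ 2) ^ (j - k).natAbs * q ^ k.natAbs * C := by ring
        _ ≤ q ^ j.natAbs * q ^ (j - k).natAbs * C :=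
          mul_le_mul_of_nonneg_right (sq_pow_natAbs_sub_mul_pow_natAbs_le hq0 hq1.le j k) hC
    have hnonneg (k : ℤ) : 0 ≤ (q ^ 2) ^ (j - k).natAbs * chainF (q ^ 2) L k :=
      mul_nonneg (by positivity) (chainF_nonneg (by positivity) L k)
    calc chainF (q ^ 2) (L + 1) j
        ≤ q ^ j.natAbs * ((1 + q) / (1 - q)) * C :=
          hasSum_le hterm (Summable.of_nonneg_of_le hnonneg hterm hmajor.summable).hasSum hmajor
      _ = q ^ j.natAbs * ((1 + q) / (1 - q)) ^ (L + 1) := by ring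

lemma one_add_sqrt_div_one_sub_sqrt_le {p : ℝ} (hp0 : 0 ≤ p) (hp1 : p < 1) :
    (1 + √p) / (1 - √p) ≤ 4 / (1 - p) := by
  have hq1 : √p < 1 := (Real.sqrt_lt' one_pos).2 (by rwa [one_pow])
  have hq : √p ^ 2 = p := Real.sq_sqrt hp0
  rw [div_le_div_iff₀ (by linarith) (by linarith)]
  nlinarith [Real.sqrt_nonneg p]

/-- the bound `F_s(r) ≤ p^{r/2} (4/(1-p))^s` for `s, r ∈ ℕ`. -/
theorem stmt15 (p : ℝ) (hp : p ∈ Set.Ioo (0 : ℝ) 1) (s r : ℕ) :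
    chainF p s (r : ℤ) ≤ p ^ ((r : ℝ) / 2) * (4 / (1 - p)) ^ s := by
  obtain ⟨hp0, hp1⟩ := hp
  have hq1 : √p < 1 := (Real.sqrt_lt' one_pos).2 (by rwa [one_pow])
  calc chainF p s r = chainF (√p ^ 2) s r := by rw [Real.sq_sqrt hp0.le]
    _ ≤ √p ^ r * ((1 + √p) / (1 - √p)) ^ s := chainF_sq_le (Real.sqrt_nonneg p) hq1 s r
    _ ≤ √p ^ r * (4 / (1 - p)) ^ s := by
      have hbase : 0 ≤ (1 + √p) / (1 - √p) := div_nonneg (by positivity) (by linarith)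
      gcongr ?_ * ?_ ^ s
      exact one_add_sqrt_div_one_sub_sqrt_le hp0.le hp1
    _ = p ^ ((r : ℝ) / 2) * (4 / (1 - p)) ^ s := by
      rw [Real.rpow_div_two_eq_sqrt _ hp0.le, Real.rpow_natCast]
end
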